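/- For every musical interval σ ∈ 𝔖 there exists ℓ ∈ ℕ such that K^ℓ(σ) = 𝔬, i.e., every musical interval reaches the octave after finitely many iterations of the Kepler map. -/

import Mathlib

/-!
Write `σ = [m/n]` in lowest terms with `1/2 ≤ m/n < 1`. If `σ ≠ 𝔬` then `m < n < 2m`, so
`K σ = [(n - m)/m]` with `0 < (n - m)/m < 1`. Bringing `(n - m)/m` into `[1/2, 1)` multiplies it
by a power `2^s` with `s ≥ 0`, which cannot enlarge its denominator, so `n_{K σ} ≤ m < n`.
Hence `n_σ` strictly decreases along the orbit until it reaches the fixed point `𝔬`.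
-/

/-- The positive rational numbers ℚ₊. -/
abbrev Qpos := {q : ℚ // 0 < q}

/-- Octave equivalence on ℚ₊: `q₁ ∼ q₂` iff `q₁ = 2^n * q₂` for some `n ∈ ℤ`. -/
def octaveRel (q₁ q₂ : Qpos) : Prop := ∃ n : ℤ, (q₁ : ℚ) = 2 ^ n * (q₂ : ℚ)

/-- The group of musical intervals `𝔖 = ℚ₊/∼`. -/
def MusInt := Quot octaveRel

/-- The musical interval `[q]` represented by a positive rational `q`. -/
def cls (q : ℚ) (h : 0 < q) : MusInt := Quot.mk octaveRel ⟨q, h⟩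

/-- The octave `𝔬 = [1/2]`. -/
def octave : MusInt := cls (1/2) (by norm_num)

/-- `repSpec σ (m, n)` says that `(m, n)` is a reduced representative of `σ`,
i.e. `σ = [m/n]`, `1/2 ≤ m/n < 1` and `gcd(n, m) = 1`. -/
def repSpec (σ : MusInt) (p : ℕ × ℕ) : Prop :=
  ∃ h : (0 : ℚ) < (p.1 : ℚ) / (p.2 : ℚ),
    σ = cls ((p.1 : ℚ) / (p.2 : ℚ)) h ∧
    (1 : ℚ) / 2 ≤ (p.1 : ℚ) / (p.2 : ℚ) ∧ (p.1 : ℚ) / (p.2 : ℚ) < 1 ∧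
    Nat.gcd p.2 p.1 = 1

open Classical in
/-- The canonical reduced representative `(m_σ, n_σ)` of a musical interval. -/
noncomputable def rep (σ : MusInt) : ℕ × ℕ :=
  if h : ∃ p, repSpec σ p then h.choose else (1, 2)

/-- The numerator `m_σ`, so that `σ = [m_σ/n_σ]`. -/
noncomputable def mVal (σ : MusInt) : ℕ := (rep σ).1

/-- The map `𝒩`, sending `σ` to the denominator `n_σ`, so that `σ = [m_σ/n_σ]`. -/
noncomputable def nVal (σ : MusInt) : ℕ := (rep σ).2

/-- The Kepler map `K(σ) = [(n_σ - m_σ)/m_σ]`. -/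
noncomputable def kepler (σ : MusInt) : MusInt :=
  if h : (0 : ℚ) < ((nVal σ : ℚ) - (mVal σ : ℚ)) / (mVal σ : ℚ) then
    cls (((nVal σ : ℚ) - (mVal σ : ℚ)) / (mVal σ : ℚ)) h
  else octave

/-- The height `𝔥(σ) = min {ℓ ∈ ℕ₀ : K^ℓ(σ) = 𝔬}`. -/
noncomputable def height (σ : MusInt) : ℕ := sInf {ℓ : ℕ | kepler^[ℓ] σ = octave}

/-- `n` is an Euclidean Gauss–Wantzel number: `n = 2^k * 3^l * 5^m` with
`l, m ∈ {0, 1}` and `n > 1`. -/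
def IsEuclidean (n : ℕ) : Prop :=
  1 < n ∧ ∃ k l m : ℕ, (l = 0 ∨ l = 1) ∧ (m = 0 ∨ m = 1) ∧ n = 2 ^ k * 3 ^ l * 5 ^ m

/-- `p` is a Fermat prime: a prime of the form `2^(2^n) + 1`. -/
def IsFermatPrime (p : ℕ) : Prop := p.Prime ∧ ∃ n : ℕ, p = 2 ^ (2 ^ n) + 1

/-- `n` is a Gauss–Wantzel number: `n > 1` is a power of `2` times a product of
distinct Fermat primes. -/
def IsGaussWantzel (n : ℕ) : Prop :=
  1 < n ∧ ∃ (k : ℕ) (s : Finset ℕ), (∀ p ∈ s, IsFermatPrime p) ∧ n = 2 ^ k * ∏ p ∈ s, p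

/-- `σ` is Euclidean consonant: all members of its second Kepler sequence are
Euclidean Gauss–Wantzel numbers. -/
def EuclideanConsonant (σ : MusInt) : Prop :=
  ∀ j ≤ height σ, IsEuclidean (nVal (kepler^[j] σ))

/-- `σ` is Gaussian consonant: all members of its second Kepler sequence are
Gauss–Wantzel numbers. -/
def GaussianConsonant (σ : MusInt) : Prop :=
  ∀ j ≤ height σ, IsGaussWantzel (nVal (kepler^[j] σ))


open Set

theorem Function.exists_pos_iterate_eq_of_isFixedPt {α : Type*} {f : α → α} {a : α}
    (ha : Function.IsFixedPt f a) (μ : α → ℕ) (hμ : ∀ x ≠ a, μ (f x) < μ x) (x : α) :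
    ∃ ℓ, 0 < ℓ ∧ f^[ℓ] x = a := by
  induction h : μ x using Nat.strong_induction_on generalizing x with
  | _ n ih =>
    by_cases hx : x = a
    · exact ⟨1, one_pos, by rw [Function.iterate_one, hx, ha]⟩
    · obtain ⟨ℓ, hℓ, he⟩ := ih _ (h ▸ hμ x hx) (f x) rfl
      exact ⟨ℓ + 1, ℓ.succ_pos, by rwa [Function.iterate_succ_apply]⟩

theorem Rat.den_intCast_div_natCast_le (a : ℤ) {b : ℕ} (hb : 0 < b) : ((a : ℚ) / b).den ≤ b := by
  have := Rat.den_dvd a b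
  rw [← Rat.intCast_div_eq_divInt] at this
  exact_mod_cast Int.le_of_dvd (by omega) this

section BinaryScaling

variable {K : Type*} [Field K] [LinearOrder K] [IsStrictOrderedRing K]

theorem exists_zpow_mul_mem_Ico [Archimedean K] {q : K} (hq : 0 < q) :
    ∃ t : ℤ, 2 ^ t * q ∈ Ico (1 / 2) 1 := by
  obtain ⟨j, hj, hj'⟩ := exists_mem_Ico_zpow hq one_lt_two
  have h2 : (0 : K) < 2 ^ (-(j + 1)) := by positivity
  refine ⟨-(j + 1), ?_, ?_⟩
  · calc (1 / 2 : K) = 2 ^ (-(j + 1)) * 2 ^ j := by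
          rw [← zpow_add₀ two_ne_zero, show -(j + 1) + j = -1 by ring]; norm_num
      _ ≤ 2 ^ (-(j + 1)) * q := by gcongr
  · calc 2 ^ (-(j + 1)) * q < 2 ^ (-(j + 1)) * 2 ^ (j + 1) := by gcongr
      _ = 1 := by rw [← zpow_add₀ two_ne_zero, neg_add_cancel, zpow_zero]

theorem neg_one_lt_of_half_le_zpow_mul {x : K} {t : ℤ} (hx : x < 1) (h : 1 / 2 ≤ 2 ^ t * x) :
    -1 < t := by
  have h2t : (0 : K) < 2 ^ t := by positivity
  have : (2 : K) ^ (-1 : ℤ) < 2 ^ t := by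
    calc (2 : K) ^ (-1 : ℤ) = 1 / 2 := by norm_num
      _ ≤ 2 ^ t * x := h
      _ < 2 ^ t := by nlinarith
  exact (zpow_lt_zpow_iff_right₀ one_lt_two).mp this

theorem eq_zero_of_eq_zpow_mul {a b : K} {t : ℤ} (ha : a ∈ Ico (1 / 2) 1)
    (hb : b ∈ Ico (1 / 2) 1) (h : a = 2 ^ t * b) : t = 0 := by
  have hba : b = 2 ^ (-t) * a := by
    rw [h, zpow_neg, inv_mul_cancel_left₀ (by positivity)]
  have h₁ := neg_one_lt_of_half_le_zpow_mul hb.2 (h ▸ ha.1)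
  have h₂ := neg_one_lt_of_half_le_zpow_mul ha.2 (hba ▸ hb.1)
  omega

end BinaryScaling

theorem octaveRel_equivalence : Equivalence octaveRel where
  refl _ := ⟨0, by simp⟩
  symm := by
    rintro q₁ q₂ ⟨n, h⟩
    exact ⟨-n, by rw [h, zpow_neg, inv_mul_cancel_left₀ (by positivity)]⟩
  trans := by
    rintro q₁ q₂ q₃ ⟨n, h⟩ ⟨k, h'⟩
    exact ⟨n + k, by rw [h, h', ← mul_assoc, ← zpow_add₀ two_ne_zero]⟩

theorem cls_eq_cls_iff {a b : ℚ} (ha : 0 < a) (hb : 0 < b) :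
    cls a ha = cls b hb ↔ ∃ t : ℤ, a = 2 ^ t * b :=
  (Quot.eq.trans octaveRel_equivalence.eqvGen_iff :)

theorem cls_congr {a b : ℚ} {ha : 0 < a} {hb : 0 < b} (h : a = b) : cls a ha = cls b hb := by
  subst h; rfl

theorem cls_zpow_mul (t : ℤ) {q : ℚ} (hq : 0 < q) (h : 0 < 2 ^ t * q) :
    cls (2 ^ t * q) h = cls q hq :=
  (cls_eq_cls_iff h hq).mpr ⟨t, rfl⟩

theorem eq_of_cls_eq_cls {a b : ℚ} {ha : 0 < a} {hb : 0 < b} (ha' : a ∈ Ico (1 / 2) 1)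
    (hb' : b ∈ Ico (1 / 2) 1) (h : cls a ha = cls b hb) : a = b := by
  obtain ⟨t, ht⟩ := (cls_eq_cls_iff ha hb).mp h
  rwa [eq_zero_of_eq_zpow_mul ha' hb' ht, zpow_zero, one_mul] at ht

theorem repSpec_cls {q : ℚ} (hq : 0 < q) (hq' : q ∈ Ico (1 / 2) 1) :
    repSpec (cls q hq) (q.num.toNat, q.den) := by
  have hnum0 : 0 < q.num := Rat.num_pos.mpr hq
  have hnum : ((q.num.toNat : ℕ) : ℚ) = q.num := by exact_mod_cast Int.toNat_of_nonneg hnum0.le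
  have hdiv : ((q.num.toNat : ℕ) : ℚ) / (q.den : ℚ) = q := by rw [hnum, Rat.num_div_den]
  refine ⟨by dsimp only; rwa [hdiv], cls_congr hdiv.symm, by dsimp only; rw [hdiv]; exact hq'.1,
    by dsimp only; rw [hdiv]; exact hq'.2, ?_⟩
  rw [Nat.gcd_comm, show q.num.toNat = q.num.natAbs by omega]
  exact q.reduced

theorem exists_repSpec (σ : MusInt) : ∃ p, repSpec σ p := by
  induction σ using Quot.ind with
  | _ q =>
    obtain ⟨q, hq⟩ := q
    obtain ⟨t, ht⟩ := exists_zpow_mul_mem_Ico hq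
    exact ⟨_, cls_zpow_mul t hq (by positivity) ▸ repSpec_cls _ ht⟩

theorem repSpec_unique {σ : MusInt} {p p' : ℕ × ℕ} (hp : repSpec σ p) (hp' : repSpec σ p') :
    p = p' := by
  obtain ⟨h0, hσ, h1, h2, hcop⟩ := hp
  obtain ⟨h0', hσ', h1', h2', hcop'⟩ := hp'
  have hdiv := eq_of_cls_eq_cls ⟨h1, h2⟩ ⟨h1', h2'⟩ (hσ ▸ hσ')
  have hden : ∀ {a b : ℕ}, (0 : ℚ) < a / b → (0 : ℤ) < b := fun {a b} h => by
    have : b ≠ 0 := by rintro rfl; simp at h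
    omega
  have hcop_int : ∀ {a b : ℕ}, b.gcd a = 1 → (a : ℤ).natAbs.Coprime (b : ℤ).natAbs := fun h => by
    rw [Int.natAbs_natCast, Int.natAbs_natCast]; exact Nat.coprime_comm.mp h
  obtain ⟨e1, e2⟩ := Rat.div_int_inj (a := p.1) (c := p'.1) (hden h0) (hden h0') (hcop_int hcop)
    (hcop_int hcop') (by simpa only [Int.cast_natCast] using hdiv)
  exact Prod.ext (by exact_mod_cast e1) (by exact_mod_cast e2)

theorem repSpec_rep (σ : MusInt) : repSpec σ (rep σ) := by
  rw [rep, dif_pos (exists_repSpec σ)]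
  exact (exists_repSpec σ).choose_spec

theorem rep_cls {q : ℚ} (hq : 0 < q) (hq' : q ∈ Ico (1 / 2) 1) :
    rep (cls q hq) = (q.num.toNat, q.den) :=
  repSpec_unique (repSpec_rep _) (repSpec_cls hq hq')

theorem rep_octave : rep octave = (1, 2) := by
  rw [octave, rep_cls _ ⟨by norm_num, by norm_num⟩]
  norm_num

theorem nVal_cls_le_den {x : ℚ} (hx : 0 < x) (hx1 : x < 1) : nVal (cls x hx) ≤ x.den := by
  obtain ⟨t, ht⟩ := exists_zpow_mul_mem_Ico hx
  lift t to ℕ using (by have := neg_one_lt_of_half_le_zpow_mul hx1 ht.1; omega)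
  rw [nVal, ← cls_zpow_mul t hx (by positivity), rep_cls _ ht, zpow_natCast]
  refine Nat.le_of_dvd x.den_pos ?_
  simpa using Rat.mul_den_dvd (2 ^ t) x

theorem isFixedPt_kepler_octave : Function.IsFixedPt kepler octave := by
  unfold Function.IsFixedPt kepler mVal nVal
  rw [rep_octave, dif_pos (by norm_num)]
  exact (cls_eq_cls_iff _ _).mpr ⟨1, by norm_num⟩

theorem mVal_lt_nVal_lt_two_mul_mVal {σ : MusInt} (hσ : σ ≠ octave) :
    mVal σ < nVal σ ∧ nVal σ < 2 * mVal σ := by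
  have hspec := repSpec_rep σ
  rw [mVal, nVal]
  generalize rep σ = p at hspec
  obtain ⟨m, n⟩ := p
  obtain ⟨h0, hσ', h1, h2, hcop⟩ := hspec
  dsimp only at *
  have hn : (0 : ℚ) < n := by
    have : n ≠ 0 := by rintro rfl; simp at h0
    positivity
  rw [le_div_iff₀ hn] at h1
  rw [div_lt_one hn] at h2
  have hmn : m < n := by exact_mod_cast h2
  have hn2m : n ≤ 2 * m := by exact_mod_cast (by linarith : (n : ℚ) ≤ 2 * m)
  refine ⟨hmn, lt_of_le_of_ne hn2m fun h => hσ ?_⟩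
  have hm : m = 1 := by rwa [h, Nat.gcd_mul_left_left] at hcop
  rw [hσ', octave]
  exact cls_congr (by rw [h, hm]; norm_num)

theorem nVal_kepler_lt {σ : MusInt} (hσ : σ ≠ octave) : nVal (kepler σ) < nVal σ := by
  obtain ⟨hmn, hn2m⟩ := mVal_lt_nVal_lt_two_mul_mVal hσ
  have hm : 0 < mVal σ := by omega
  have hmnℚ : (mVal σ : ℚ) < nVal σ := by exact_mod_cast hmn
  have hn2mℚ : (nVal σ : ℚ) < 2 * mVal σ := by exact_mod_cast hn2m
  have hx0 : 0 < ((nVal σ : ℚ) - mVal σ) / mVal σ := div_pos (by linarith) (by positivity)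
  have hx1 : ((nVal σ : ℚ) - mVal σ) / mVal σ < 1 := (div_lt_one (by positivity)).mpr (by linarith)
  rw [kepler, dif_pos hx0]
  calc nVal (cls _ hx0) ≤ (((nVal σ : ℚ) - mVal σ) / mVal σ).den := nVal_cls_le_den hx0 hx1
    _ ≤ mVal σ := by
      simpa using Rat.den_intCast_div_natCast_le ((nVal σ : ℤ) - mVal σ) hm
    _ < nVal σ := hmn

/-- every musical interval reaches the octave after finitely many
iterations of the Kepler map. -/
theorem kepler_iterate_eq_octave (σ : MusInt) :
    ∃ ℓ : ℕ, 0 < ℓ ∧ kepler^[ℓ] σ = octave :=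
  Function.exists_pos_iterate_eq_of_isFixedPt isFixedPt_kepler_octave nVal
    (fun _ => nVal_kepler_lt) σ
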